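/- arXiv:math/0703282 — 5 statements merged into one kernel-verified Lean document; each statement's English description precedes it below -/
import Mathlib

section
/- Let A be a C*-algebra and let F : G → A be a locally integrable function such that F(t) ≥ 0 for every t ∈ G. Then the following are equivalent: (1) F is unconditionally integrable; (2) for every net (w_i) of measurable functions G → [0,1], each with relatively compact support, converging to 1 uniformly on every compact subset of G, the net (∫_G w_i(t)·F(t) dμ(t)) converges in A; (3) there exists at least one such net (w_i) for which (∫_G w_i(t)·F(t) dμ(t)) converges in A. Moreover, in this case, for every net (w_i) as in (2) the limit lim_i ∫_G w_i(t)·F(t) dμ(t) equals the unconditional integral of F. -/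
/-- A net of measurable functions `G → [0,1]`, each with relatively compact support,
converging to `1` uniformly on every compact subset of `G`. -/
structure ApproxNet (G : Type) [TopologicalSpace G] [MeasurableSpace G] : Type 1 where
  ι : Type
  [pre : Preorder ι]
  dir : IsDirected ι (· ≤ ·)
  ne : Nonempty ι
  w : ι → G → ℝ
  meas : ∀ i, Measurable (w i)
  mem_Icc : ∀ i t, w i t ∈ Set.Icc (0 : ℝ) 1
  supp : ∀ i, IsCompact (closure (Function.support (w i)))
  unif : ∀ L : Set G, IsCompact L →
    TendstoUniformlyOn w (fun _ => (1 : ℝ)) Filter.atTop L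

attribute [instance] ApproxNet.pre

open MeasureTheory Filter Topology

/-! The set integrals `∫_K F` increase with `K`. For a net `(w i)` as in the statement,
`∫_K w i • F ≤ ∫ w i • F ≤ ∫_{tsupport (w i)} F`, and `∫_K w i • F → ∫_K F` because `w i → 1`
uniformly on `K`. Hence the limit of either net bounds every set integral from above, and
in a C*-algebra `0 ≤ x ≤ y` implies `‖x‖ ≤ ‖y‖`, which turns these order sandwiches into norm
estimates `‖a - x‖ ≤ ‖a - y‖` for `y ≤ x ≤ a`. -/

section StarModule

variable {A : Type*}

-- A positive cone forces `star` to be conjugate-linear: on `ℂ` with the trivial involution every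
-- element is a square, so no `StarOrderedRing` structure exists.
theorem star_algebraMap_I [Ring A] [StarRing A] [Algebra ℂ A] [PartialOrder A]
    [StarOrderedRing A] : star (algebraMap ℂ A Complex.I) = -algebraMap ℂ A Complex.I := by
  set j := algebraMap ℂ A Complex.I
  have hj : j * j = -1 := by simp [j, ← map_mul]
  have hj_comm : ∀ a : A, Commute j a := Algebra.commutes Complex.I
  have hsj_comm (a : A) : Commute (star j) a := by
    simpa using (hj_comm (star a)).star_star
  -- `v = j⋆ j` is a self-adjoint square root of `1`, and `q = 1 - v` satisfies `q² = 2q`;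
  -- both `q⋆ q = 2q` and `(jq)⋆ (jq) = -2q` are nonnegative, so `q = 0`.
  set v := star j * j
  have hv : v * v = 1 := by
    calc v * v = star (j * j) * (j * j) := by
          simp only [v, star_mul, mul_assoc, (hsj_comm j).left_comm]
      _ = 1 := by simp [hj]
  set q := 1 - v
  have hq_star : star q = q := by simp [q, v]
  have hqq : q * q = q + q := by
    simp only [q, sub_mul, mul_sub, one_mul, mul_one, hv]; abel
  have hq_nonneg : 0 ≤ q + q := by simpa [hq_star, hqq] using star_mul_self_nonneg q
  have hq_nonpos : 0 ≤ -(q + q) := by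
    have hvq : v * q = -q := by simp only [q, mul_sub, mul_one, hv]; abel
    have h : star (j * q) * (j * q) = -(q + q) := by
      rw [star_mul, hq_star, mul_assoc, ← mul_assoc (star j), hvq, mul_neg, hqq]
    exact h ▸ star_mul_self_nonneg (j * q)
  have hq : q = 0 := by
    have h2q : q + q = 0 := le_antisymm (neg_nonneg.mp hq_nonpos) hq_nonneg
    calc q = (2⁻¹ : ℂ) • (q + q) := by rw [← two_smul ℂ, smul_smul]; norm_num
      _ = 0 := by rw [h2q, smul_zero]
  have hv1 : v = 1 := (sub_eq_zero.mp hq).symm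
  calc star j = v * -j := by
        rw [mul_neg, mul_assoc, hj, (hsj_comm _).neg_right.eq]
        simp
    _ = -j := by rw [hv1, one_mul]

variable [NormedRing A] [StarRing A] [CStarRing A] [NormedAlgebra ℂ A] [PartialOrder A]
  [StarOrderedRing A]

theorem star_algebraMap_complex (r : ℂ) :
    star (algebraMap ℂ A r) = algebraMap ℂ A (starRingEnd ℂ r) := by
  have h_real (x : ℝ) : star (algebraMap ℂ A x) = algebraMap ℂ A x := by
    rw [Algebra.algebraMap_eq_smul_one, Complex.coe_smul]
    exact (map_real_smul (starAddEquiv : A ≃+ A) continuous_star x 1).trans (by simp)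
  rw [← Complex.re_add_im r]
  simp only [map_add, map_mul, star_add, star_mul, h_real, star_algebraMap_I,
    Complex.conj_ofReal, Complex.conj_I, mul_neg, map_neg, neg_mul]
  rw [Algebra.commutes]

theorem starModule_complex_of_starOrderedRing : StarModule ℂ A where
  star_smul r a := by
    rw [Algebra.smul_def, star_mul, star_algebraMap_complex, ← Algebra.commutes,
      ← Algebra.smul_def, starRingEnd_apply]

abbrev CStarAlgebra.ofStarOrderedRing [CompleteSpace A] : CStarAlgebra A where
  toStarModule := starModule_complex_of_starOrderedRing

end StarModule

theorem tendsto_setIntegral_smul_of_tendstoUniformlyOn {α ι E : Type*} [MeasurableSpace α]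
    {μ : Measure α} [NormedAddCommGroup E] [NormedSpace ℝ E] {l : Filter ι}
    {w : ι → α → ℝ} {f : α → E} {s : Set α} (hs : MeasurableSet s) (hf : IntegrableOn f s μ)
    (hw : ∀ i, AEStronglyMeasurable (w i) (μ.restrict s))
    (hu : TendstoUniformlyOn w (fun _ => 1) l s) :
    Tendsto (fun i => ∫ x in s, w i x • f x ∂μ) l (𝓝 (∫ x in s, f x ∂μ)) := by
  rw [Metric.tendsto_nhds]
  intro ε hε
  set C := ∫ x in s, ‖f x‖ ∂μ
  have hC : 0 ≤ C := integral_nonneg fun _ => norm_nonneg _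
  set δ := ε / (C + 1)
  have hδ : 0 < δ := by positivity
  filter_upwards [Metric.tendstoUniformlyOn_iff.mp hu δ hδ] with i hi
  have hbound : ∀ᵐ x ∂μ.restrict s, ‖(w i x - 1) • f x‖ ≤ δ * ‖f x‖ := by
    refine (ae_restrict_iff' hs).2 (ae_of_all _ fun x hx => ?_)
    rw [norm_smul, Real.norm_eq_abs, abs_sub_comm, ← Real.dist_eq]
    exact mul_le_mul_of_nonneg_right (hi x hx).le (norm_nonneg _)
  have hint : Integrable (fun x => (w i x - 1) • f x) (μ.restrict s) :=
    (hf.norm.const_mul δ).mono' (((hw i).sub aestronglyMeasurable_const).smul hf.1) hbound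
  have hsplit : (fun x => w i x • f x) = fun x => (w i x - 1) • f x + f x := by
    ext x; rw [sub_smul, one_smul, sub_add_cancel]
  calc dist (∫ x in s, w i x • f x ∂μ) (∫ x in s, f x ∂μ)
      = ‖∫ x in s, (w i x - 1) • f x ∂μ‖ := by
        rw [dist_eq_norm, hsplit, integral_add hint hf, add_sub_cancel_right]
    _ ≤ ∫ x in s, δ * ‖f x‖ ∂μ := norm_integral_le_of_norm_le (hf.norm.const_mul δ) hbound
    _ = δ * C := integral_const_mul δ _
    _ < ε := by
        rw [div_mul_eq_mul_div, div_lt_iff₀ (by positivity)]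
        nlinarith

abbrev RelCompactSet (G : Type*) [TopologicalSpace G] [MeasurableSpace G] : Type _ :=
  {K : Set G // MeasurableSet K ∧ IsCompact (closure K)}

namespace RelCompactSet

variable {G : Type*} [TopologicalSpace G] [MeasurableSpace G]

instance : Nonempty (RelCompactSet G) := ⟨⟨∅, MeasurableSet.empty, by simp⟩⟩

instance : IsDirectedOrder (RelCompactSet G) where
  directed K L := ⟨⟨K.1 ∪ L.1, K.2.1.union L.2.1, by rw [closure_union]; exact K.2.2.union L.2.2⟩,
    Set.subset_union_left, Set.subset_union_right⟩

theorem monotone_setIntegral {E : Type*} [NormedAddCommGroup E] [NormedSpace ℝ E] [PartialOrder E]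
    [IsOrderedAddMonoid E] [IsOrderedModule ℝ E] [OrderClosedTopology E] {μ : Measure G}
    {F : G → E} (hloc : ∀ K : Set G, MeasurableSet K → IsCompact (closure K) → IntegrableOn F K μ)
    (hpos : ∀ t, 0 ≤ F t) :
    Monotone fun K : RelCompactSet G => ∫ t in (K : Set G), F t ∂μ :=
  fun _ L hKL => setIntegral_mono_set (hloc L L.2.1 L.2.2) (ae_of_all _ hpos) hKL.eventuallyLE

end RelCompactSet

namespace ApproxNet

variable {G : Type} [TopologicalSpace G] [MeasurableSpace G] (N : ApproxNet G) {μ : Measure G}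
  {E : Type*} [NormedAddCommGroup E] [NormedSpace ℝ E] {F : G → E}

theorem tendsto_setIntegral_smul {K : Set G} (hK : MeasurableSet K) (hKc : IsCompact (closure K))
    (hF : IntegrableOn F K μ) :
    Tendsto (fun i => ∫ t in K, N.w i t • F t ∂μ) atTop (𝓝 (∫ t in K, F t ∂μ)) :=
  tendsto_setIntegral_smul_of_tendstoUniformlyOn hK hF (fun i => (N.meas i).aestronglyMeasurable)
    ((N.unif _ hKc).mono subset_closure)

variable [OpensMeasurableSpace G]

def tsupportSet (i : N.ι) : RelCompactSet G :=
  ⟨tsupport (N.w i), (isClosed_tsupport _).measurableSet, by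
    rw [(isClosed_tsupport _).closure_eq]; exact N.supp i⟩

theorem integrable_smul
    (hloc : ∀ K : Set G, MeasurableSet K → IsCompact (closure K) → IntegrableOn F K μ) (i : N.ι) :
    Integrable (fun t => N.w i t • F t) μ := by
  have hF := hloc _ (N.tsupportSet i).2.1 (N.tsupportSet i).2.2
  refine (integrableOn_iff_integrable_of_support_subset
    ((Function.support_smul_subset_left _ _).trans (subset_tsupport _))).1 ?_
  refine hF.bdd_smul 1 (N.meas i).aestronglyMeasurable (ae_of_all _ fun t => ?_)
  simpa [abs_le] using ⟨(N.mem_Icc i t).1.trans' (by norm_num), (N.mem_Icc i t).2⟩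

variable [PartialOrder E] [IsOrderedAddMonoid E] [IsOrderedModule ℝ E] [OrderClosedTopology E]

theorem setIntegral_smul_le_integral
    (hloc : ∀ K : Set G, MeasurableSet K → IsCompact (closure K) → IntegrableOn F K μ)
    (hpos : ∀ t, 0 ≤ F t) (i : N.ι) (K : Set G) :
    ∫ t in K, N.w i t • F t ∂μ ≤ ∫ t, N.w i t • F t ∂μ :=
  setIntegral_le_integral (N.integrable_smul hloc i)
    (ae_of_all _ fun t => smul_nonneg (N.mem_Icc i t).1 (hpos t))

theorem integral_smul_le_setIntegral
    (hloc : ∀ K : Set G, MeasurableSet K → IsCompact (closure K) → IntegrableOn F K μ)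
    (hpos : ∀ t, 0 ≤ F t) {i : N.ι} {K : Set G} (hK : MeasurableSet K)
    (hF : IntegrableOn F K μ) (hsupp : Function.support (N.w i) ⊆ K) :
    ∫ t, N.w i t • F t ∂μ ≤ ∫ t in K, F t ∂μ := by
  rw [← setIntegral_eq_integral_of_forall_compl_eq_zero fun t ht => by
    rw [Function.notMem_support.1 fun h => ht (hsupp h), zero_smul]]
  exact setIntegral_mono_on (N.integrable_smul hloc i).integrableOn hF hK
    fun t _ => smul_le_of_le_one_left (hpos t) (N.mem_Icc i t).2

end ApproxNet

theorem CStarAlgebra.dist_le_dist_of_le_of_le {A : Type*} [CStarAlgebra A] [PartialOrder A]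
    [StarOrderedRing A] {a x y : A} (hyx : y ≤ x) (hxa : x ≤ a) : dist x a ≤ dist y a := by
  rw [dist_eq_norm', dist_eq_norm']
  exact CStarAlgebra.norm_le_norm_of_nonneg_of_le (sub_nonneg.2 hxa) (sub_le_sub_left hyx a)

namespace ApproxNet

variable {G : Type} [TopologicalSpace G] [MeasurableSpace G] [OpensMeasurableSpace G]
  {μ : Measure G} {A : Type*} [CStarAlgebra A] [PartialOrder A] [StarOrderedRing A] {F : G → A}

theorem tendsto_integral_smul_of_tendsto_setIntegral
    (hloc : ∀ K : Set G, MeasurableSet K → IsCompact (closure K) → IntegrableOn F K μ)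
    (hpos : ∀ t, 0 ≤ F t) {a : A}
    (ha : Tendsto (fun K : RelCompactSet G => ∫ t in (K : Set G), F t ∂μ) atTop (𝓝 a))
    (N : ApproxNet G) : Tendsto (fun i => ∫ t, N.w i t • F t ∂μ) atTop (𝓝 a) := by
  have hle := (RelCompactSet.monotone_setIntegral hloc hpos).ge_of_tendsto ha
  rw [Metric.tendsto_nhds]
  intro ε hε
  obtain ⟨K, hK⟩ := (ha.eventually (Metric.ball_mem_nhds a (half_pos hε))).exists
  filter_upwards [Metric.tendsto_nhds.1
    (N.tendsto_setIntegral_smul K.2.1 K.2.2 (hloc K K.2.1 K.2.2)) _ (half_pos hε)] with i hi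
  have hupper : ∫ t, N.w i t • F t ∂μ ≤ a :=
    (N.integral_smul_le_setIntegral hloc hpos (N.tsupportSet i).2.1
      (hloc _ (N.tsupportSet i).2.1 (N.tsupportSet i).2.2) (subset_tsupport _)).trans
      (hle (N.tsupportSet i))
  calc dist (∫ t, N.w i t • F t ∂μ) a
      ≤ dist (∫ t in (K : Set G), N.w i t • F t ∂μ) a :=
        CStarAlgebra.dist_le_dist_of_le_of_le (N.setIntegral_smul_le_integral hloc hpos i K)
          hupper
    _ ≤ dist (∫ t in (K : Set G), N.w i t • F t ∂μ) (∫ t in (K : Set G), F t ∂μ) +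
        dist (∫ t in (K : Set G), F t ∂μ) a := dist_triangle _ _ _
    _ < ε / 2 + ε / 2 := add_lt_add hi hK
    _ = ε := add_halves ε

theorem tendsto_setIntegral_of_tendsto_integral_smul
    (hloc : ∀ K : Set G, MeasurableSet K → IsCompact (closure K) → IntegrableOn F K μ)
    (hpos : ∀ t, 0 ≤ F t) (N : ApproxNet G) {b : A}
    (hb : Tendsto (fun i => ∫ t, N.w i t • F t ∂μ) atTop (𝓝 b)) :
    Tendsto (fun K : RelCompactSet G => ∫ t in (K : Set G), F t ∂μ) atTop (𝓝 b) := by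
  have := N.dir
  have := N.ne
  have hle (K : RelCompactSet G) : ∫ t in (K : Set G), F t ∂μ ≤ b :=
    le_of_tendsto_of_tendsto' (N.tendsto_setIntegral_smul K.2.1 K.2.2 (hloc K K.2.1 K.2.2)) hb
      fun i => N.setIntegral_smul_le_integral hloc hpos i K
  rw [Metric.tendsto_nhds]
  intro ε hε
  obtain ⟨i, hi⟩ := (hb.eventually (Metric.ball_mem_nhds b hε)).exists
  filter_upwards [eventually_ge_atTop (N.tsupportSet i)] with K hK
  exact (CStarAlgebra.dist_le_dist_of_le_of_le (N.integral_smul_le_setIntegral hloc hpos K.2.1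
    (hloc K K.2.1 K.2.2) ((subset_tsupport _).trans hK)) (hle K)).trans_lt hi

end ApproxNet

noncomputable def ApproxNet.indicator (G : Type) [TopologicalSpace G] [MeasurableSpace G]
    [OpensMeasurableSpace G] [R1Space G] : ApproxNet G where
  ι := RelCompactSet G
  dir := inferInstance
  ne := inferInstance
  w K := (K : Set G).indicator 1
  meas K := measurable_one.indicator K.2.1
  mem_Icc K t := by
    by_cases ht : t ∈ (K : Set G) <;> simp [ht]
  supp K := by simpa using K.2.2
  unif L hL := by
    rw [Metric.tendstoUniformlyOn_iff]
    intro ε hε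
    filter_upwards [eventually_ge_atTop
      (⟨closure L, isClosed_closure.measurableSet, by simpa using hL.closure⟩ : RelCompactSet G)]
      with K hK t ht
    simp [Set.indicator_of_mem (hK (subset_closure ht)), hε]

theorem stmt0_general
    {G : Type} [TopologicalSpace G] [T2Space G] [MeasurableSpace G] [BorelSpace G]
    (μ : Measure G)
    {A : Type} [NormedRing A] [StarRing A] [CStarRing A]
    [NormedAlgebra ℂ A] [CompleteSpace A] [PartialOrder A] [StarOrderedRing A]
    (F : G → A)
    (hloc : ∀ K : Set G, MeasurableSet K → IsCompact (closure K) → IntegrableOn F K μ)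
    (hpos : ∀ t, 0 ≤ F t) :
    -- (1) ↔ (2)
    (((∃ a : A,
        Tendsto (fun K : {K : Set G // MeasurableSet K ∧ IsCompact (closure K)} =>
            ∫ t in (K : Set G), F t ∂μ) atTop (𝓝 a)) ↔
      (∀ N : ApproxNet G, ∃ a : A,
        Tendsto (fun i : N.ι => ∫ t, ((N.w i t : ℝ) : ℂ) • F t ∂μ) atTop (𝓝 a))) ∧
    -- (1) ↔ (3)
    ((∃ a : A,
        Tendsto (fun K : {K : Set G // MeasurableSet K ∧ IsCompact (closure K)} =>
            ∫ t in (K : Set G), F t ∂μ) atTop (𝓝 a)) ↔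
      (∃ N : ApproxNet G, ∃ a : A,
        Tendsto (fun i : N.ι => ∫ t, ((N.w i t : ℝ) : ℂ) • F t ∂μ) atTop (𝓝 a)))) ∧
    -- moreover: every net limit agrees with the unconditional integral
    (∀ a : A,
      Tendsto (fun K : {K : Set G // MeasurableSet K ∧ IsCompact (closure K)} =>
          ∫ t in (K : Set G), F t ∂μ) atTop (𝓝 a) →
      ∀ N : ApproxNet G,
        Tendsto (fun i : N.ι => ∫ t, ((N.w i t : ℝ) : ℂ) • F t ∂μ) atTop (𝓝 a)) := by
  let : CStarAlgebra A := CStarAlgebra.ofStarOrderedRing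
  simp only [Complex.coe_smul]
  have h_net (a : A) (ha : Tendsto (fun K : RelCompactSet G => ∫ t in (K : Set G), F t ∂μ)
      atTop (𝓝 a)) (N : ApproxNet G) := N.tendsto_integral_smul_of_tendsto_setIntegral hloc hpos ha
  have h_set (N : ApproxNet G) (b : A)
      (hb : Tendsto (fun i => ∫ t, N.w i t • F t ∂μ) atTop (𝓝 b)) :=
    N.tendsto_setIntegral_of_tendsto_integral_smul hloc hpos hb
  refine ⟨⟨⟨fun ⟨a, ha⟩ N => ⟨a, h_net a ha N⟩, fun h => ?_⟩,
    ⟨fun ⟨a, ha⟩ => ⟨ApproxNet.indicator G, a, h_net a ha _⟩,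
      fun ⟨N, b, hb⟩ => ⟨b, h_set N b hb⟩⟩⟩, h_net⟩
  obtain ⟨b, hb⟩ := h (ApproxNet.indicator G)
  exact ⟨b, h_set _ b hb⟩

theorem stmt0
    {G : Type} [TopologicalSpace G] [Group G] [IsTopologicalGroup G]
    [LocallyCompactSpace G] [T2Space G] [MeasurableSpace G] [BorelSpace G]
    (μ : Measure G) [μ.IsHaarMeasure]
    {A : Type} [NormedRing A] [StarRing A] [CStarRing A]
    [NormedAlgebra ℂ A] [CompleteSpace A] [PartialOrder A] [StarOrderedRing A]
    (F : G → A)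
    (hloc : ∀ K : Set G, MeasurableSet K → IsCompact (closure K) → IntegrableOn F K μ)
    (hpos : ∀ t, 0 ≤ F t) :
    -- (1) ↔ (2)
    (((∃ a : A,
        Tendsto (fun K : {K : Set G // MeasurableSet K ∧ IsCompact (closure K)} =>
            ∫ t in (K : Set G), F t ∂μ) atTop (𝓝 a)) ↔
      (∀ N : ApproxNet G, ∃ a : A,
        Tendsto (fun i : N.ι => ∫ t, ((N.w i t : ℝ) : ℂ) • F t ∂μ) atTop (𝓝 a))) ∧
    -- (1) ↔ (3)
    ((∃ a : A,
        Tendsto (fun K : {K : Set G // MeasurableSet K ∧ IsCompact (closure K)} =>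
            ∫ t in (K : Set G), F t ∂μ) atTop (𝓝 a)) ↔
      (∃ N : ApproxNet G, ∃ a : A,
        Tendsto (fun i : N.ι => ∫ t, ((N.w i t : ℝ) : ℂ) • F t ∂μ) atTop (𝓝 a)))) ∧
    -- moreover: every net limit agrees with the unconditional integral
    (∀ a : A,
      Tendsto (fun K : {K : Set G // MeasurableSet K ∧ IsCompact (closure K)} =>
          ∫ t in (K : Set G), F t ∂μ) atTop (𝓝 a) →
      ∀ N : ApproxNet G,
        Tendsto (fun i : N.ι => ∫ t, ((N.w i t : ℝ) : ℂ) • F t ∂μ) atTop (𝓝 a)) :=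
  stmt0_general μ F hloc hpos
end

section
/- Let ξ, η ∈ H be square-integrable vectors, let φ ∈ L∞(G,μ), and let ζ ∈ H. Then the H-valued function t ↦ φ(t)·⟪γ_t η, ζ⟫·(γ_t ξ) is unconditionally integrable, with unconditional integral T_ξ*(φ·(T_η ζ)), where φ·(T_η ζ) denotes the pointwise product in L²(G,μ). Moreover, for every relatively compact measurable K ⊆ G, ‖∫_K φ(t)·⟪γ_t η, ζ⟫·(γ_t ξ) dμ(t)‖ ≤ ‖φ‖_{L∞}·‖T_ξ‖·‖T_η‖·‖ζ‖. -/
/-!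
Pairing `∫_K F` with `v ∈ H` gives `⟪1_K g, T_ξ v⟫` in `L²`, so `∫_K F = T_ξ* (1_K g)` for every
relatively compact `K`, and the bound follows from `‖1_K g‖ ≤ ‖g‖ ≤ ‖φ‖_∞ ‖T_η ζ‖`. It remains
to see that `1_K g → g` in `L²` along the net of relatively compact sets. The Haar measure is
not assumed inner regular, so this uses the shape of `g`: it vanishes off the support of the
continuous `L²` function `t ↦ ⟪γ_t η, ζ⟫`, and that support lies in a σ-compact set, because
each open set `{|⟪γ_t η, ζ⟫| > 1/n}` has finite measure and therefore meets only countably many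
cosets of an open σ-compact subgroup (the one generated by a compact neighbourhood of `1`).
-/

open MeasureTheory Filter Topology

/-- `F : G → H` is unconditionally integrable with unconditional integral `c`:
the net of Bochner integrals over relatively compact measurable subsets of `G`,
directed by inclusion, converges to `c` in norm. -/
def UncondIntegral {G : Type} [TopologicalSpace G] [MeasurableSpace G]
    {H : Type} [NormedAddCommGroup H] [NormedSpace ℝ H]
    (μ : Measure G) (F : G → H) (c : H) : Prop :=
  Filter.Tendsto (fun K : {K : Set G // MeasurableSet K ∧ IsCompact (closure K)} =>
    ∫ t in (K : Set G), F t ∂μ) Filter.atTop (nhds c)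

open Set Pointwise ENNReal NNReal

section TopologicalGroup

variable {G : Type*} [TopologicalSpace G] [Group G] [IsTopologicalGroup G]
  [WeaklyLocallyCompactSpace G]

lemma exists_isOpen_isSigmaCompact_subgroup :
    ∃ H : Subgroup G, IsOpen (H : Set G) ∧ IsSigmaCompact (H : Set G) := by
  obtain ⟨V, hVc, hV1⟩ := exists_compact_mem_nhds (1 : G)
  set W := V ∪ V⁻¹
  have hWinv : W⁻¹ = W := by rw [union_inv, inv_inv, union_comm]
  let H : Subgroup G :=
    { carrier := ⋃ n : ℕ, W ^ n
      one_mem' := mem_iUnion.2 ⟨0, by simp⟩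
      mul_mem' := by
        intro a b ha hb
        obtain ⟨m, ha⟩ := mem_iUnion.1 ha
        obtain ⟨n, hb⟩ := mem_iUnion.1 hb
        exact mem_iUnion.2 ⟨m + n, pow_add W m n ▸ mul_mem_mul ha hb⟩
      inv_mem' := by
        intro a ha
        obtain ⟨n, ha⟩ := mem_iUnion.1 ha
        refine mem_iUnion.2 ⟨n, ?_⟩
        rw [← hWinv, inv_pow]
        exact Set.inv_mem_inv.2 ha }
  refine ⟨H, H.isOpen_of_mem_nhds (g := 1) ?_, ?_⟩
  · refine mem_of_superset hV1 fun x hx => mem_iUnion.2 ⟨1, ?_⟩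
    rw [pow_one]
    exact mem_union_left _ hx
  · refine isSigmaCompact_iUnion_of_isCompact _ fun n => ?_
    induction n with
    | zero => simp
    | succ n ih => rw [pow_succ]; exact ih.mul (hVc.union hVc.inv)

lemma IsOpen.exists_isSigmaCompact_superset [MeasurableSpace G] [OpensMeasurableSpace G]
    (μ : Measure G) [μ.IsOpenPosMeasure] {U : Set G} (hU : IsOpen U) (hμU : μ U ≠ ∞) :
    ∃ S, IsSigmaCompact S ∧ U ⊆ S := by
  obtain ⟨H, hHo, hHσ⟩ := exists_isOpen_isSigmaCompact_subgroup (G := G)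
  have := QuotientGroup.discreteTopology hHo
  let π : G → G ⧸ H := QuotientGroup.mk
  have hfiber_open (q : G ⧸ H) : IsOpen (π ⁻¹' {q}) :=
    (isOpen_discrete {q}).preimage continuous_quot_mk
  have hfiber_σ (q : G ⧸ H) : IsSigmaCompact (π ⁻¹' {q}) := by
    obtain ⟨y, rfl⟩ := QuotientGroup.mk_surjective q
    rw [← image_singleton, QuotientGroup.preimage_image_mk_eq_mul, singleton_mul]
    exact hHσ.image (continuous_const_mul y)
  have hcount : {q | 0 < μ (U ∩ π ⁻¹' {q})}.Countable := by
    refine Measure.countable_meas_pos_of_disjoint_of_meas_iUnion_ne_top μ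
      (fun q => (hU.inter (hfiber_open q)).measurableSet) ?_ ?_
    · exact fun q q' hqq' =>
        ((disjoint_singleton.2 hqq').preimage π).mono inter_subset_right inter_subset_right
    · rwa [← inter_iUnion, ← preimage_iUnion, iUnion_singleton_eq_range, range_id',
        preimage_univ, inter_univ]
  refine ⟨⋃ q ∈ {q | 0 < μ (U ∩ π ⁻¹' {q})}, π ⁻¹' {q},
    isSigmaCompact_biUnion hcount fun q _ => hfiber_σ q, fun x hx => ?_⟩
  -- `U` meets the coset of each of its points in a nonempty open set, hence in positive measure
  exact mem_biUnion ((hU.inter (hfiber_open (π x))).measure_pos μ ⟨x, hx, rfl⟩) rfl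

lemma MeasureTheory.MemLp.exists_isSigmaCompact_support_subset {E : Type*} [MeasurableSpace G]
    [OpensMeasurableSpace G] {μ : Measure G} [μ.IsOpenPosMeasure] [NormedAddCommGroup E]
    {p : ℝ≥0∞} {f : G → E} (hf : MemLp f p μ) (hp₀ : p ≠ 0) (hp : p ≠ ∞)
    (hcont : Continuous f) : ∃ S, IsSigmaCompact S ∧ Function.support f ⊆ S := by
  have hU (n : ℕ) : ∃ S, IsSigmaCompact S ∧ {x | 1 / ((n : ℝ≥0) + 1) < ‖f x‖₊} ⊆ S := by
    refine (isOpen_lt continuous_const hcont.nnnorm).exists_isSigmaCompact_superset μ ?_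
    have hfin := hf.meas_ge_lt_top hp₀ hp (one_div_pos.2 n.cast_add_one_pos).ne'
    exact ((measure_mono <| ofPred_subset_ofPred.2 fun x hx => hx.le).trans_lt hfin).ne
  choose S hSσ hS using hU
  refine ⟨⋃ n, S n, isSigmaCompact_iUnion S hSσ, fun x hx => ?_⟩
  obtain ⟨n, hn⟩ := exists_nat_one_div_lt (nnnorm_pos.2 hx)
  exact mem_iUnion.2 ⟨n, hS n hn⟩

end TopologicalGroup

namespace MeasureTheory

lemma MemLp.exists_isCompact_eLpNorm_indicator_compl_lt {X E : Type*} [TopologicalSpace X]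
    [R1Space X] [MeasurableSpace X] [OpensMeasurableSpace X] {μ : Measure X}
    [NormedAddCommGroup E] {p : ℝ≥0∞} {f : X → E} (hf : MemLp f p μ) (hp : p ≠ ∞)
    {S : Set X} (hS : IsSigmaCompact S) (hfS : ∀ᵐ x ∂μ, x ∉ S → f x = 0)
    {ε : ℝ≥0∞} (hε : ε ≠ 0) :
    ∃ D, IsCompact D ∧ IsClosed D ∧ eLpNorm (Dᶜ.indicator f) p μ < ε := by
  rcases eq_or_ne p 0 with rfl | hp₀
  · exact ⟨∅, isCompact_empty, isClosed_empty, by simp [pos_iff_ne_zero.2 hε]⟩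
  obtain ⟨K, hK, rfl⟩ := hS
  set D : ℕ → Set X := fun n => closure (accumulate K n)
  have hDm (n : ℕ) : MeasurableSet (D n)ᶜ := isClosed_closure.measurableSet.compl
  set ν := μ.withDensity fun x => ‖f x‖ₑ ^ p.toReal
  have hν : Tendsto (fun n => ν (D n)ᶜ) atTop (𝓝 0) := by
    have hanti : Antitone fun n => (D n)ᶜ := fun m n hmn =>
      compl_subset_compl.2 (closure_mono (monotone_accumulate hmn))
    have hfin : ν univ ≠ ∞ := by
      rw [withDensity_apply _ MeasurableSet.univ, Measure.restrict_univ]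
      exact ((eLpNorm_lt_top_iff_lintegral_rpow_enorm_lt_top hp₀ hp).1 hf.2).ne
    have hlim := tendsto_measure_iInter_atTop (μ := ν) (fun n => (hDm n).nullMeasurableSet)
      hanti ⟨0, measure_ne_top_of_subset (subset_univ _) hfin⟩
    have hzero : ν (⋂ n, (D n)ᶜ) = 0 := by
      rw [withDensity_apply _ (MeasurableSet.iInter hDm)]
      refine (setLIntegral_congr_fun_ae (MeasurableSet.iInter hDm) ?_).trans
        (lintegral_zero (μ := μ.restrict _))
      filter_upwards [hfS] with x hx hxD
      have hxS : x ∉ ⋃ n, K n := fun hxS => by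
        obtain ⟨n, hn⟩ := mem_iUnion.1 hxS
        exact mem_iInter.1 hxD n (subset_closure (subset_accumulate hn))
      rw [hx hxS, enorm_zero, ENNReal.zero_rpow_of_pos (ENNReal.toReal_pos hp₀ hp)]
    rwa [hzero] at hlim
  obtain ⟨n, hn⟩ := (hν.eventually (gt_mem_nhds
    (ENNReal.rpow_pos_of_nonneg (pos_iff_ne_zero.2 hε) ENNReal.toReal_nonneg))).exists
  refine ⟨D n, (isCompact_accumulate hK n).closure, isClosed_closure, ?_⟩
  rwa [eLpNorm_indicator_eq_eLpNorm_restrict (hDm n),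
    eLpNorm_eq_lintegral_rpow_enorm_toReal hp₀ hp, one_div,
    ENNReal.rpow_inv_lt_iff (ENNReal.toReal_pos hp₀ hp), ← withDensity_apply _ (hDm n)]

lemma MemLp.integrableOn_smul_of_continuous {X 𝕜 E : Type*} [TopologicalSpace X]
    [MeasurableSpace X] [OpensMeasurableSpace X] {μ : Measure X} [IsFiniteMeasureOnCompacts μ]
    [NormedField 𝕜] [NormedAddCommGroup E] [NormedSpace 𝕜 E] {φ : X → 𝕜} (hφ : MemLp φ ⊤ μ)
    {u : X → E} (hu : Continuous u) {K : Set X} (hK : IsCompact (closure K)) :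
    IntegrableOn (fun t => φ t • u t) K μ := by
  have hu' : IntegrableOn u (closure K) μ :=
    hu.continuousOn.integrableOn_compact' hK isClosed_closure.measurableSet
  exact IntegrableOn.mono_set (memLp_one_iff_integrable.1
    ((memLp_one_iff_integrable.2 hu').smul (hφ.restrict _))) subset_closure

lemma Lp.norm_le_of_ae_eq_smul {X 𝕜 E : Type*} [MeasurableSpace X] {μ : Measure X}
    [NormedRing 𝕜] [NormedAddCommGroup E] [MulActionWithZero 𝕜 E] [IsBoundedSMul 𝕜 E]
    {p : ℝ≥0∞} {φ : X → 𝕜} (hφ : MemLp φ ⊤ μ) {f g : Lp E p μ} (hg : g =ᵐ[μ] φ • ⇑f) :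
    ‖g‖ ≤ (eLpNorm φ ⊤ μ).toReal * ‖f‖ := by
  rw [Lp.norm_def, Lp.norm_def, ← toReal_mul, eLpNorm_congr_ae hg]
  exact toReal_mono (mul_ne_top hφ.eLpNorm_ne_top (Lp.eLpNorm_ne_top f))
    (eLpNorm_smul_le_eLpNorm_top_mul_eLpNorm p (Lp.aestronglyMeasurable f) φ)

section Indicator

variable {X E : Type*} [MeasurableSpace X] {μ : Measure X} [NormedAddCommGroup E] {p : ℝ≥0∞}

noncomputable def Lp.indicator (f : Lp E p μ) {K : Set X} (hK : MeasurableSet K) : Lp E p μ :=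
  ((Lp.memLp f).indicator hK).toLp

lemma Lp.coeFn_indicator (f : Lp E p μ) {K : Set X} (hK : MeasurableSet K) :
    Lp.indicator f hK =ᵐ[μ] K.indicator f :=
  MemLp.coeFn_toLp _

lemma Lp.norm_indicator_le (f : Lp E p μ) {K : Set X} (hK : MeasurableSet K) :
    ‖Lp.indicator f hK‖ ≤ ‖f‖ := by
  rw [Lp.indicator, Lp.norm_toLp, Lp.norm_def]
  exact toReal_mono (Lp.eLpNorm_ne_top f) (eLpNorm_indicator_le _)

lemma Lp.tendsto_indicator_atTop [TopologicalSpace X] [R1Space X] [OpensMeasurableSpace X]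
    [Fact (1 ≤ p)] (hp : p ≠ ∞) (f : Lp E p μ) {S : Set X} (hS : IsSigmaCompact S)
    (hfS : ∀ᵐ x ∂μ, x ∉ S → f x = 0) :
    Tendsto (fun K : {K : Set X // MeasurableSet K ∧ IsCompact (closure K)} =>
      Lp.indicator f K.2.1) atTop (𝓝 f) := by
  rw [Metric.tendsto_nhds]
  intro ε hε
  obtain ⟨D, hD, hDc, hDε⟩ := MemLp.exists_isCompact_eLpNorm_indicator_compl_lt (Lp.memLp f) hp
    hS hfS (ENNReal.ofReal_pos.2 hε).ne'
  filter_upwards [Ici_mem_atTop ⟨D, hDc.measurableSet, by rwa [hDc.closure_eq]⟩] with K hDK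
  have htail : eLpNorm ((K : Set X)ᶜ.indicator f) p μ < ENNReal.ofReal ε := by
    rw [← inter_eq_left.2 (compl_subset_compl.2 (show D ⊆ K from hDK)), ← indicator_indicator]
    exact (eLpNorm_indicator_le _).trans_lt hDε
  rw [Lp.dist_def, eLpNorm_congr_ae ((Lp.coeFn_indicator f K.2.1).sub EventuallyEq.rfl),
    ← neg_sub, ← indicator_compl, eLpNorm_neg]
  exact (ENNReal.lt_ofReal_iff_toReal_lt htail.ne_top).1 htail

end Indicator

end MeasureTheory

lemma integral_smul_eq_adjoint_apply {X 𝕜 H : Type*} [MeasurableSpace X] {μ : Measure X}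
    [RCLike 𝕜] [NormedAddCommGroup H] [InnerProductSpace 𝕜 H] [NormedSpace ℝ H]
    [CompleteSpace H] {T : H →L[𝕜] Lp 𝕜 2 μ} {u : X → H}
    (hT : ∀ v, T v =ᵐ[μ] fun t => inner 𝕜 (u t) v)
    (f : Lp 𝕜 2 μ) (hf : Integrable (fun t => f t • u t) μ) :
    ∫ t, f t • u t ∂μ = T.adjoint f := by
  refine ext_inner_left 𝕜 fun v => ?_
  rw [ContinuousLinearMap.adjoint_inner_right, L2.inner_def, ← integral_inner hf]
  refine integral_congr_ae ?_
  filter_upwards [hT v] with t ht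
  rw [inner_smul_right, ht, RCLike.inner_apply, inner_conj_symm, mul_comm]

lemma setIntegral_smul_eq_adjoint_indicator {X 𝕜 H : Type*} [MeasurableSpace X]
    {μ : Measure X} [RCLike 𝕜] [NormedAddCommGroup H] [InnerProductSpace 𝕜 H] [NormedSpace ℝ H]
    [CompleteSpace H] {T : H →L[𝕜] Lp 𝕜 2 μ} {u : X → H}
    (hT : ∀ v, T v =ᵐ[μ] fun t => inner 𝕜 (u t) v) {f : Lp 𝕜 2 μ} {c : X → 𝕜} (hfc : f =ᵐ[μ] c)
    {K : Set X} (hK : MeasurableSet K) (hint : IntegrableOn (fun t => c t • u t) K μ) :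
    ∫ t in K, c t • u t ∂μ = T.adjoint (Lp.indicator f hK) := by
  have hae : (fun t => Lp.indicator f hK t • u t) =ᵐ[μ] K.indicator fun t => c t • u t := by
    filter_upwards [Lp.coeFn_indicator f hK, hfc] with t h1 h2
    by_cases ht : t ∈ K <;> simp [h1, h2, ht]
  rw [← integral_indicator hK, ← integral_congr_ae hae,
    integral_smul_eq_adjoint_apply hT _ ((hint.integrable_indicator hK).congr hae.symm)]

theorem stmt6_general
    {G : Type} [TopologicalSpace G] [Group G] [IsTopologicalGroup G]
    [LocallyCompactSpace G] [MeasurableSpace G] [BorelSpace G]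
    (μ : Measure G) [μ.IsHaarMeasure]
    {H : Type} [NormedAddCommGroup H] [InnerProductSpace ℂ H] [CompleteSpace H]
    -- a strongly continuous unitary representation of G on H
    (γ : G → H ≃ₗᵢ[ℂ] H)
    (hγ_cont : ∀ x : H, Continuous fun t => γ t x)
    -- square-integrable vectors ξ and η, with associated operators Tξ, Tη
    (ξ η : H)
    (hη : ∀ v : H, MemLp (fun t => (inner ℂ (γ t η) v : ℂ)) 2 μ)
    (Tξ : H →L[ℂ] Lp ℂ 2 μ)
    (hTξ : ∀ v : H, (Tξ v : G → ℂ) =ᵐ[μ] fun t => (inner ℂ (γ t ξ) v : ℂ))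
    (Tη : H →L[ℂ] Lp ℂ 2 μ)
    (hTη : ∀ v : H, (Tη v : G → ℂ) =ᵐ[μ] fun t => (inner ℂ (γ t η) v : ℂ))
    -- an essentially bounded function φ and a vector ζ
    (φ : G → ℂ) (hφ : MemLp φ ⊤ μ)
    (ζ : H)
    -- g = φ·(Tη ζ), the pointwise product, as an element of L²(G,μ)
    (g : Lp ℂ 2 μ)
    (hg : (g : G → ℂ) =ᵐ[μ] fun t => φ t * (Tη ζ : G → ℂ) t) :
    UncondIntegral μ (fun t => (φ t * (inner ℂ (γ t η) ζ : ℂ)) • γ t ξ)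
      (ContinuousLinearMap.adjoint Tξ g) ∧
    ∀ K : Set G, MeasurableSet K → IsCompact (closure K) →
      ‖∫ t in K, (φ t * (inner ℂ (γ t η) ζ : ℂ)) • γ t ξ ∂μ‖ ≤
        (eLpNorm φ ⊤ μ).toReal * ‖Tξ‖ * ‖Tη‖ * ‖ζ‖ := by
  set c : G → ℂ := fun t => inner ℂ (γ t η) ζ
  have hc : Continuous c := (hγ_cont η).inner continuous_const
  have hgc : (g : G → ℂ) =ᵐ[μ] fun t => φ t * c t := by
    filter_upwards [hg, hTη ζ] with t h1 h2
    rw [h1, h2]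
  have key (K : Set G) (hK : MeasurableSet K) (hKc : IsCompact (closure K)) :
      ∫ t in K, (φ t * c t) • γ t ξ ∂μ = Tξ.adjoint (Lp.indicator g hK) := by
    refine setIntegral_smul_eq_adjoint_indicator hTξ hgc hK ?_
    simpa only [mul_smul] using
      hφ.integrableOn_smul_of_continuous (u := fun t => c t • γ t ξ) (hc.smul (hγ_cont ξ)) hKc
  obtain ⟨S, hS, hcS⟩ := (hη ζ).exists_isSigmaCompact_support_subset two_ne_zero ofNat_ne_top hc
  have hgS : ∀ᵐ t ∂μ, t ∉ S → g t = 0 := by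
    filter_upwards [hgc] with t ht htS
    rw [ht, show c t = 0 from Function.notMem_support.1 (mt (@hcS t) htS), mul_zero]
  refine ⟨?_, fun K hK hKc => ?_⟩
  · exact ((Tξ.adjoint.continuous.tendsto g).comp
      (Lp.tendsto_indicator_atTop ofNat_ne_top g hS hgS)).congr fun K => (key K K.2.1 K.2.2).symm
  · rw [key K hK hKc]
    calc ‖Tξ.adjoint (Lp.indicator g hK)‖ ≤ ‖Tξ‖ * ‖g‖ := by
          simpa using Tξ.adjoint.le_opNorm_of_le (Lp.norm_indicator_le g hK)
      _ ≤ ‖Tξ‖ * ((eLpNorm φ ⊤ μ).toReal * (‖Tη‖ * ‖ζ‖)) := by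
          gcongr
          exact (Lp.norm_le_of_ae_eq_smul hφ hg).trans (by gcongr; exact Tη.le_opNorm ζ)
      _ = (eLpNorm φ ⊤ μ).toReal * ‖Tξ‖ * ‖Tη‖ * ‖ζ‖ := by ring

theorem stmt6
    {G : Type} [TopologicalSpace G] [Group G] [IsTopologicalGroup G]
    [LocallyCompactSpace G] [T2Space G] [MeasurableSpace G] [BorelSpace G]
    (μ : Measure G) [μ.IsHaarMeasure]
    {H : Type} [NormedAddCommGroup H] [InnerProductSpace ℂ H] [CompleteSpace H]
    -- a strongly continuous unitary representation of G on H
    (γ : G → H ≃ₗᵢ[ℂ] H)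
    (hγ_one : ∀ x : H, γ 1 x = x)
    (hγ_mul : ∀ s t : G, ∀ x : H, γ (s * t) x = γ s (γ t x))
    (hγ_cont : ∀ x : H, Continuous fun t => γ t x)
    -- square-integrable vectors ξ and η, with associated operators Tξ, Tη
    (ξ η : H)
    (hξ : ∀ v : H, MemLp (fun t => (inner ℂ (γ t ξ) v : ℂ)) 2 μ)
    (hη : ∀ v : H, MemLp (fun t => (inner ℂ (γ t η) v : ℂ)) 2 μ)
    (Tξ : H →L[ℂ] Lp ℂ 2 μ)
    (hTξ : ∀ v : H, (Tξ v : G → ℂ) =ᵐ[μ] fun t => (inner ℂ (γ t ξ) v : ℂ))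
    (Tη : H →L[ℂ] Lp ℂ 2 μ)
    (hTη : ∀ v : H, (Tη v : G → ℂ) =ᵐ[μ] fun t => (inner ℂ (γ t η) v : ℂ))
    -- an essentially bounded function φ and a vector ζ
    (φ : G → ℂ) (hφ : MemLp φ ⊤ μ)
    (ζ : H)
    -- g = φ·(Tη ζ), the pointwise product, as an element of L²(G,μ)
    (g : Lp ℂ 2 μ)
    (hg : (g : G → ℂ) =ᵐ[μ] fun t => φ t * (Tη ζ : G → ℂ) t) :
    UncondIntegral μ (fun t => (φ t * (inner ℂ (γ t η) ζ : ℂ)) • γ t ξ)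
      (ContinuousLinearMap.adjoint Tξ g) ∧
    ∀ K : Set G, MeasurableSet K → IsCompact (closure K) →
      ‖∫ t in K, (φ t * (inner ℂ (γ t η) ζ : ℂ)) • γ t ξ ∂μ‖ ≤
        (eLpNorm φ ⊤ μ).toReal * ‖Tξ‖ * ‖Tη‖ * ‖ζ‖ :=
  stmt6_general μ γ hγ_cont ξ η hη Tξ hTξ Tη hTη φ hφ ζ g hg
end

section
/- Assume G is Abelian with Pontryagin dual Ĝ, and for χ ∈ Ĝ let M_χ be the unitary operator on L²(G,μ) given by (M_χ f)(t) = conj(⟨χ,t⟩)·f(t). Let ξ, η ∈ H be square-integrable and set X := T_ξ* ∘ M_χ ∘ T_η, a bounded operator on H. Then for every square-integrable ζ ∈ H the vector X(ζ) is again square-integrable, and T_{X(ζ)} = M_χ ∘ T_ζ ∘ X*. -/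
/-!
Writing `⟪X w, v⟫` as the integral of `χ t · conj ⟪γ_t η, w⟫ · ⟪γ_t ξ, v⟫` and substituting
`t ↦ s t` (left invariance of Haar measure) gives the covariance `X γ_s = conj (χ s) · γ_s X`.
Hence `⟪γ_t ζ, X* v⟫ = χ t · ⟪γ_t (X ζ), v⟫`, and since `|χ t| = 1` multiplying by
`conj (χ t)` turns `T_ζ X* v` into the coefficient function of `X ζ`; being a.e. equal to an
element of `L²`, that function is square-integrable.
-/

open MeasureTheory Filter Topology

open ComplexConjugate

section AdjointFormula

variable {α H : Type*} [MeasurableSpace α] {μ : Measure α}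
  [NormedAddCommGroup H] [InnerProductSpace ℂ H] [CompleteSpace H]

lemma inner_adjoint_comp_comp_apply_eq_integral (A B : H →L[ℂ] Lp ℂ 2 μ)
    (M : Lp ℂ 2 μ →L[ℂ] Lp ℂ 2 μ) (c : α → ℂ)
    (hM : ∀ f : Lp ℂ 2 μ, (M f : α → ℂ) =ᵐ[μ] fun t => conj (c t) * (f : α → ℂ) t)
    (a b : H → α → ℂ) (hA : ∀ v, (A v : α → ℂ) =ᵐ[μ] a v)
    (hB : ∀ w, (B w : α → ℂ) =ᵐ[μ] b w) (w v : H) :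
    inner ℂ ((ContinuousLinearMap.adjoint A).comp (M.comp B) w) v
      = ∫ t, c t * conj (b w t) * a v t ∂μ := by
  rw [ContinuousLinearMap.comp_apply, ContinuousLinearMap.adjoint_inner_left, L2.inner_def]
  refine integral_congr_ae ?_
  filter_upwards [hM (B w), hB w, hA v] with t hMt hBt hAt
  simp only [RCLike.inner_apply, ContinuousLinearMap.comp_apply, hMt, hBt, hAt, map_mul,
    Complex.conj_conj]
  ring

end AdjointFormula

section Representation

variable {G H : Type*} [Group G] [NormedAddCommGroup H] [InnerProductSpace ℂ H]
  {γ : G → H ≃ₗᵢ[ℂ] H}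

lemma inner_apply_eq_inner_inv_apply (hγ_one : ∀ x : H, γ 1 x = x)
    (hγ_mul : ∀ s t : G, ∀ x : H, γ (s * t) x = γ s (γ t x)) (s : G) (x v : H) :
    inner ℂ (γ s x) v = inner ℂ x (γ s⁻¹ v) := by
  conv_lhs => rw [← hγ_one v, ← mul_inv_cancel s, hγ_mul]
  exact (γ s).inner_map_map x (γ s⁻¹ v)

lemma map_apply_eq_conj_smul_of_inner_eq_integral [MeasurableSpace G] [MeasurableMul G]
    {μ : Measure G} [μ.IsMulLeftInvariant]
    (hγ_one : ∀ x : H, γ 1 x = x) (hγ_mul : ∀ s t : G, ∀ x : H, γ (s * t) x = γ s (γ t x))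
    (χ : G →* Circle) (ξ η : H) (X : H →L[ℂ] H)
    (hX : ∀ w v, inner ℂ (X w) v
      = ∫ t, (χ t : ℂ) * conj (inner ℂ (γ t η) w) * inner ℂ (γ t ξ) v ∂μ)
    (s : G) (w : H) :
    X (γ s w) = conj (χ s : ℂ) • γ s (X w) := by
  have hγ_inv := inner_apply_eq_inner_inv_apply hγ_one hγ_mul
  refine ext_inner_right ℂ fun v => ?_
  rw [inner_smul_left, Complex.conj_conj, hγ_inv, hX, hX, ← integral_const_mul,
    ← integral_mul_left_eq_self _ s]
  refine integral_congr_ae (Eventually.of_forall fun t => ?_)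
  simp only [hγ_mul, LinearIsometryEquiv.inner_map_map, hγ_inv s (γ t ξ) v, map_mul,
    Circle.coe_mul]
  ring

end Representation

theorem stmt7_general
    {G : Type} [TopologicalSpace G] [CommGroup G] [IsTopologicalGroup G]
    [MeasurableSpace G] [BorelSpace G]
    (μ : Measure G) [μ.IsHaarMeasure]
    {H : Type} [NormedAddCommGroup H] [InnerProductSpace ℂ H] [CompleteSpace H]
    -- a strongly continuous unitary representation of G on H
    (γ : G → H ≃ₗᵢ[ℂ] H)
    (hγ_one : ∀ x : H, γ 1 x = x)
    (hγ_mul : ∀ s t : G, ∀ x : H, γ (s * t) x = γ s (γ t x))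
    -- the unitary M_χ of pointwise multiplication by conj ∘ χ on L²(G,μ)
    (χ : PontryaginDual G)
    (Mχ : Lp ℂ 2 μ →L[ℂ] Lp ℂ 2 μ)
    (hMχ : ∀ f : Lp ℂ 2 μ,
      (Mχ f : G → ℂ) =ᵐ[μ] fun t => (starRingEnd ℂ) (χ t : ℂ) * (f : G → ℂ) t)
    -- square-integrable vectors ξ, η, ζ with associated operators Tξ, Tη, Tζ
    (ξ η ζ : H)
    (Tξ : H →L[ℂ] Lp ℂ 2 μ)
    (hTξ : ∀ v : H, (Tξ v : G → ℂ) =ᵐ[μ] fun t => (inner ℂ (γ t ξ) v : ℂ))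
    (Tη : H →L[ℂ] Lp ℂ 2 μ)
    (hTη : ∀ v : H, (Tη v : G → ℂ) =ᵐ[μ] fun t => (inner ℂ (γ t η) v : ℂ))
    (Tζ : H →L[ℂ] Lp ℂ 2 μ)
    (hTζ : ∀ v : H, (Tζ v : G → ℂ) =ᵐ[μ] fun t => (inner ℂ (γ t ζ) v : ℂ)) :
    let X : H →L[ℂ] H := (ContinuousLinearMap.adjoint Tξ).comp (Mχ.comp Tη)
    -- X(ζ) is square-integrable
    (∀ v : H, MemLp (fun t => (inner ℂ (γ t (X ζ)) v : ℂ)) 2 μ) ∧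
    -- T_{X(ζ)} = M_χ ∘ T_ζ ∘ X*
    (∀ v : H,
      ((Mχ.comp (Tζ.comp (ContinuousLinearMap.adjoint X))) v : G → ℂ)
        =ᵐ[μ] fun t => (inner ℂ (γ t (X ζ)) v : ℂ)) := by
  intro X
  have hcov : ∀ s w, X (γ s w) = conj (χ s : ℂ) • γ s (X w) :=
    map_apply_eq_conj_smul_of_inner_eq_integral hγ_one hγ_mul (μ := μ) χ ξ η X
      (inner_adjoint_comp_comp_apply_eq_integral Tξ Tη Mχ _ hMχ _ _ hTξ hTη)
  have hcoeff : ∀ v, (Mχ.comp (Tζ.comp (ContinuousLinearMap.adjoint X)) v : G → ℂ)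
      =ᵐ[μ] fun t => inner ℂ (γ t (X ζ)) v := by
    intro v
    filter_upwards [hMχ (Tζ (ContinuousLinearMap.adjoint X v)),
      hTζ (ContinuousLinearMap.adjoint X v)] with t hMt hTt
    rw [ContinuousLinearMap.comp_apply, ContinuousLinearMap.comp_apply, hMt, hTt,
      ContinuousLinearMap.adjoint_inner_right, hcov, inner_smul_left, Complex.conj_conj,
      ← mul_assoc, Complex.conj_mul', Circle.norm_coe, Complex.ofReal_one, one_pow, one_mul]
  exact ⟨fun v => (Lp.memLp _).ae_eq (hcoeff v), hcoeff⟩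

theorem stmt7
    {G : Type} [TopologicalSpace G] [CommGroup G] [IsTopologicalGroup G]
    [LocallyCompactSpace G] [T2Space G] [MeasurableSpace G] [BorelSpace G]
    (μ : Measure G) [μ.IsHaarMeasure]
    {H : Type} [NormedAddCommGroup H] [InnerProductSpace ℂ H] [CompleteSpace H]
    -- a strongly continuous unitary representation of G on H
    (γ : G → H ≃ₗᵢ[ℂ] H)
    (hγ_one : ∀ x : H, γ 1 x = x)
    (hγ_mul : ∀ s t : G, ∀ x : H, γ (s * t) x = γ s (γ t x))
    (hγ_cont : ∀ x : H, Continuous fun t => γ t x)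
    -- the unitary M_χ of pointwise multiplication by conj ∘ χ on L²(G,μ)
    (χ : PontryaginDual G)
    (Mχ : Lp ℂ 2 μ →L[ℂ] Lp ℂ 2 μ)
    (hMχ : ∀ f : Lp ℂ 2 μ,
      (Mχ f : G → ℂ) =ᵐ[μ] fun t => (starRingEnd ℂ) (χ t : ℂ) * (f : G → ℂ) t)
    -- square-integrable vectors ξ, η, ζ with associated operators Tξ, Tη, Tζ
    (ξ η ζ : H)
    (hξ : ∀ v : H, MemLp (fun t => (inner ℂ (γ t ξ) v : ℂ)) 2 μ)
    (hη : ∀ v : H, MemLp (fun t => (inner ℂ (γ t η) v : ℂ)) 2 μ)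
    (hζ : ∀ v : H, MemLp (fun t => (inner ℂ (γ t ζ) v : ℂ)) 2 μ)
    (Tξ : H →L[ℂ] Lp ℂ 2 μ)
    (hTξ : ∀ v : H, (Tξ v : G → ℂ) =ᵐ[μ] fun t => (inner ℂ (γ t ξ) v : ℂ))
    (Tη : H →L[ℂ] Lp ℂ 2 μ)
    (hTη : ∀ v : H, (Tη v : G → ℂ) =ᵐ[μ] fun t => (inner ℂ (γ t η) v : ℂ))
    (Tζ : H →L[ℂ] Lp ℂ 2 μ)
    (hTζ : ∀ v : H, (Tζ v : G → ℂ) =ᵐ[μ] fun t => (inner ℂ (γ t ζ) v : ℂ)) :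
    let X : H →L[ℂ] H := (ContinuousLinearMap.adjoint Tξ).comp (Mχ.comp Tη)
    -- X(ζ) is square-integrable
    (∀ v : H, MemLp (fun t => (inner ℂ (γ t (X ζ)) v : ℂ)) 2 μ) ∧
    -- T_{X(ζ)} = M_χ ∘ T_ζ ∘ X*
    (∀ v : H,
      ((Mχ.comp (Tζ.comp (ContinuousLinearMap.adjoint X))) v : G → ℂ)
        =ᵐ[μ] fun t => (inner ℂ (γ t (X ζ)) v : ℂ)) :=
  stmt7_general μ γ hγ_one hγ_mul χ Mχ hMχ ξ η ζ Tξ hTξ Tη hTη Tζ hTζ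
end

section
/- For every ξ ∈ L²(Ĝ,ν) and every continuous compactly supported function f : G → ℂ, the Bochner integral ∫_G f(t)·(γ_t ξ) dμ(t), computed in L²(Ĝ,ν), equals (as an element of L²(Ĝ,ν), i.e. almost everywhere) the function ω ↦ f̂(ω)·ξ(ω), where f̂(ω) := ∫_G f(t)·conj(⟨ω,t⟩) dμ(t). -/
/-! Pairing with a test vector `η ∈ L²(Ĝ)` turns `⟪η, ∫ f(t) γ_t ξ dμ⟫` into the double integral
`∫_G ∫_Ĝ f(t) conj⟨ω,t⟩ conj(η ω) ξ(ω) dν dμ`, which Fubini lets us integrate in `t` first, giving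
`⟪η, f̂ ξ⟫`. The vector-valued integral makes sense because `t ↦ γ_t ξ` is continuous into `L²`,
by dominated convergence applied to `‖γ_s ξ - γ_t ξ‖²`. -/

open MeasureTheory Filter Topology Function ComplexConjugate
open scoped ENNReal

namespace MeasureTheory

variable {T X 𝕜 E : Type*} [MeasurableSpace X] {ν : Measure X} [NormedAddCommGroup E]

theorem Lp.continuous_of_ae_eq_smul [NormedField 𝕜] [NormedSpace 𝕜 E] [TopologicalSpace T]
    [FirstCountableTopology T] {p : ℝ≥0∞} [Fact (1 ≤ p)] (hp : p ≠ ∞)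
    {F : T → Lp E p ν} {ξ : Lp E p ν} {χ : T → X → 𝕜} {C : ℝ}
    (hχ_meas : ∀ t, AEStronglyMeasurable (χ t) ν) (hχ_cont : ∀ x, Continuous fun t => χ t x)
    (hχ_le : ∀ t x, ‖χ t x‖ ≤ C) (hF : ∀ t, F t =ᵐ[ν] fun x => χ t x • ξ x) :
    Continuous F := by
  have hp₀ : p ≠ 0 := (zero_lt_one.trans_le Fact.out).ne'
  have hp₀' : p.toReal ≠ 0 := ENNReal.toReal_ne_zero.mpr ⟨hp₀, hp⟩
  rw [continuous_iff_continuousAt]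
  intro t₀
  set I : T → ℝ := fun s => ∫ x, ‖(χ s x - χ t₀ x) • ξ x‖ ^ p.toReal ∂ν
  have hdist : ∀ s, dist (F s) (F t₀) = I s ^ p.toReal⁻¹ := by
    intro s
    have hdiff : ⇑(F s) - ⇑(F t₀) =ᵐ[ν] fun x => (χ s x - χ t₀ x) • ξ x := by
      filter_upwards [hF s, hF t₀] with x hs ht
      simp only [Pi.sub_apply, hs, ht, sub_smul]
    rw [Lp.dist_def, eLpNorm_congr_ae hdiff,
      (((Lp.memLp (F s)).sub (Lp.memLp (F t₀))).ae_eq hdiff).eLpNorm_eq_integral_rpow_norm hp₀ hp,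
      ENNReal.toReal_ofReal (by positivity)]
  have hI : Continuous I := by
    refine continuous_of_dominated (bound := fun x => (2 * C) ^ p.toReal * ‖ξ x‖ ^ p.toReal)
      (fun s => ?_) (fun s => ae_of_all _ fun x => ?_) ?_ (ae_of_all _ fun x => ?_)
    · exact ((((hχ_meas s).sub (hχ_meas t₀)).smul
        (Lp.aestronglyMeasurable ξ)).norm.aemeasurable.pow_const _).aestronglyMeasurable
    · have hC : ‖χ s x - χ t₀ x‖ ≤ 2 * C := by
        linarith [norm_sub_le (χ s x) (χ t₀ x), hχ_le s x, hχ_le t₀ x]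
      have hC₀ : 0 ≤ 2 * C := (norm_nonneg _).trans hC
      rw [Real.norm_of_nonneg (by positivity), norm_smul, ← Real.mul_rpow hC₀ (norm_nonneg _)]
      gcongr
    · exact ((Lp.memLp ξ).integrable_norm_rpow hp₀ hp).const_mul _
    · exact (((hχ_cont x).sub continuous_const).smul continuous_const).norm.rpow_const
        fun _ => Or.inr ENNReal.toReal_nonneg
  have hI₀ : I t₀ = 0 := by simp [I, Real.zero_rpow hp₀']
  rw [ContinuousAt, tendsto_iff_dist_tendsto_zero]
  simp_rw [hdist]
  simpa [hI₀, Real.zero_rpow (inv_ne_zero hp₀')] using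
    (hI.tendsto t₀).rpow_const (p := p.toReal⁻¹) (Or.inr (by positivity))

theorem L2.coeFn_integral_ae_eq_integral_smul [RCLike 𝕜] [InnerProductSpace 𝕜 E]
    [CompleteSpace E] [NormedSpace ℝ E] [MeasurableSpace T] {μ : Measure T} [SFinite μ] [SFinite ν]
    {F : T → Lp E 2 ν} {ξ : Lp E 2 ν} {k : T → X → 𝕜} {g : T → ℝ}
    (hF : Integrable F μ) (hk : AEStronglyMeasurable (uncurry k) (μ.prod ν))
    (hg : Integrable g μ) (hkg : ∀ t x, ‖k t x‖ ≤ g t)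
    (hFk : ∀ t, F t =ᵐ[ν] fun x => k t x • ξ x) :
    ⇑(∫ t, F t ∂μ) =ᵐ[ν] fun x => (∫ t, k t x ∂μ) • ξ x := by
  have hmem : MemLp (fun x => (∫ t, k t x ∂μ) • ξ x) 2 ν := by
    refine (Lp.memLp ξ).of_le_mul (c := ∫ t, g t ∂μ)
      (hk.prod_swap.integral_prod_right'.smul (Lp.aestronglyMeasurable ξ)) (ae_of_all _ fun x => ?_)
    rw [norm_smul]
    gcongr
    exact norm_integral_le_of_norm_le hg (ae_of_all _ (hkg · x))
  suffices ∫ t, F t ∂μ = hmem.toLp _ from this ▸ hmem.coeFn_toLp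
  refine ext_inner_left 𝕜 fun η => ?_
  have hηξ := L2.integrable_inner (𝕜 := 𝕜) η ξ
  have hint : Integrable (uncurry fun t x => k t x * inner 𝕜 (η x) (ξ x)) (μ.prod ν) := by
    refine (hg.mul_prod hηξ.norm).mono' (hk.mul hηξ.aestronglyMeasurable.comp_snd)
      (ae_of_all _ fun ⟨t, x⟩ => ?_)
    simp only [uncurry_apply_pair, norm_mul]
    gcongr
    exact hkg _ _
  calc inner 𝕜 η (∫ t, F t ∂μ)
      = ∫ t, ∫ x, k t x * inner 𝕜 (η x) (ξ x) ∂ν ∂μ := by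
        rw [← integral_inner hF]
        refine integral_congr_ae (ae_of_all _ fun t => ?_)
        refine integral_congr_ae ?_
        filter_upwards [hFk t] with x hx
        rw [hx, inner_smul_right]
    _ = ∫ x, ∫ t, k t x * inner 𝕜 (η x) (ξ x) ∂μ ∂ν := integral_integral_swap hint
    _ = inner 𝕜 η (hmem.toLp _) := by
        refine integral_congr_ae ?_
        filter_upwards [hmem.coeFn_toLp] with x hx
        rw [hx, inner_smul_right, integral_mul_const]

end MeasureTheory

namespace PontryaginDual

variable {G : Type*} [TopologicalSpace G] [CommGroup G]

theorem continuous_coe_apply [LocallyCompactSpace G] :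
    Continuous fun p : PontryaginDual G × G => ((p.1 p.2 : Circle) : ℂ) :=
  continuous_subtype_val.comp
    (continuous_fst.eval continuous_snd : Continuous fun p : (G →ₜ* Circle) × G => p.1 p.2)

-- With local compactness this makes Haar measures on the dual σ-finite, as Fubini needs.
instance [LocallyCompactSpace G] [SecondCountableTopology G] :
    SecondCountableTopology (PontryaginDual G) :=
  (ContinuousMonoidHom.isInducing_toContinuousMap G Circle).secondCountableTopology

end PontryaginDual

theorem stmt10_general
    {G : Type} [TopologicalSpace G] [CommGroup G] [IsTopologicalGroup G]
    [LocallyCompactSpace G] [SecondCountableTopology G]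
    [MeasurableSpace G] [BorelSpace G]
    (μ : Measure G) [μ.IsHaarMeasure]
    [MeasurableSpace (PontryaginDual G)] [BorelSpace (PontryaginDual G)]
    (ν : Measure (PontryaginDual G)) [ν.IsHaarMeasure]
    -- the representation γ of G on L²(Ĝ,ν): (γ_t ξ)(ω) = conj⟨ω,t⟩·ξ(ω)
    (γ : G → (Lp ℂ 2 ν →L[ℂ] Lp ℂ 2 ν))
    (hγ : ∀ (t : G) (ξ : Lp ℂ 2 ν),
      (γ t ξ : PontryaginDual G → ℂ) =ᵐ[ν]
        fun ω => (starRingEnd ℂ) (ω t : ℂ) * (ξ : PontryaginDual G → ℂ) ω) :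
    ∀ (ξ : Lp ℂ 2 ν) (f : G → ℂ), Continuous f → HasCompactSupport f →
      ((∫ t, f t • γ t ξ ∂μ : Lp ℂ 2 ν) : PontryaginDual G → ℂ) =ᵐ[ν]
        fun ω => (∫ t, f t * (starRingEnd ℂ) (ω t : ℂ) ∂μ) *
          (ξ : PontryaginDual G → ℂ) ω := by
  intro ξ f hf hsupp
  have hχ : Continuous fun p : PontryaginDual G × G => conj ((p.1 p.2 : Circle) : ℂ) :=
    Complex.continuous_conj.comp PontryaginDual.continuous_coe_apply
  have hγξ : Continuous fun t => γ t ξ :=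
    Lp.continuous_of_ae_eq_smul ENNReal.ofNat_ne_top (C := 1)
      (fun t => (hχ.comp (continuous_id.prodMk continuous_const)).aestronglyMeasurable)
      (fun ω => hχ.comp (continuous_const.prodMk continuous_id))
      (fun t ω => by simp [(Circle.norm_coe _).le]) (hγ · ξ)
  refine L2.coeFn_integral_ae_eq_integral_smul (F := fun t => f t • γ t ξ)
    ((hf.smul hγξ).integrable_of_hasCompactSupport hsupp.smul_right)
    (Continuous.aestronglyMeasurable
      (f := uncurry fun t (ω : PontryaginDual G) => f t * conj (ω t : ℂ))
      ((hf.comp continuous_fst).mul (hχ.comp continuous_swap)))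
    (hf.norm.integrable_of_hasCompactSupport hsupp.norm) (fun t ω => by simp [Circle.norm_coe])
    fun t => ?_
  filter_upwards [Lp.coeFn_smul (f t) (γ t ξ), hγ t ξ] with ω hsmul hω
  rw [hsmul, Pi.smul_apply, hω, smul_eq_mul, smul_eq_mul, mul_assoc]

theorem stmt10
    {G : Type} [TopologicalSpace G] [CommGroup G] [IsTopologicalGroup G]
    [LocallyCompactSpace G] [T2Space G] [SecondCountableTopology G]
    [MeasurableSpace G] [BorelSpace G]
    (μ : Measure G) [μ.IsHaarMeasure]
    [MeasurableSpace (PontryaginDual G)] [BorelSpace (PontryaginDual G)]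
    (ν : Measure (PontryaginDual G)) [ν.IsHaarMeasure]
    -- the representation γ of G on L²(Ĝ,ν): (γ_t ξ)(ω) = conj⟨ω,t⟩·ξ(ω)
    (γ : G → (Lp ℂ 2 ν →L[ℂ] Lp ℂ 2 ν))
    (hγ : ∀ (t : G) (ξ : Lp ℂ 2 ν),
      (γ t ξ : PontryaginDual G → ℂ) =ᵐ[ν]
        fun ω => (starRingEnd ℂ) (ω t : ℂ) * (ξ : PontryaginDual G → ℂ) ω) :
    ∀ (ξ : Lp ℂ 2 ν) (f : G → ℂ), Continuous f → HasCompactSupport f →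
      ((∫ t, f t • γ t ξ ∂μ : Lp ℂ 2 ν) : PontryaginDual G → ℂ) =ᵐ[ν]
        fun ω => (∫ t, f t * (starRingEnd ℂ) (ω t : ℂ) ∂μ) *
          (ξ : PontryaginDual G → ℂ) ω :=
  stmt10_general μ ν γ hγ
end

section
/- For every h ∈ C_c(X) the function E₁(h) is well defined (for each x ∈ X the integrand t ↦ h(t⁻¹·x) is continuous with compact support), bounded, continuous, and G-invariant, and the induced function Ẽ₁(h) on the orbit space X/G belongs to C₀(X/G). Moreover, the set {Ẽ₁(h) : h ∈ C_c(X)} is a linear subspace of C₀(X/G) that is closed under multiplication by arbitrary elements of C₀(X/G) (i.e. it is an ideal), and it is dense in C₀(X/G) with respect to the supremum norm. -/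
/-!
Write `E₁ h = orbitIntegral μ h`. Properness of the action makes `{t | ∃ x ∈ V, t⁻¹ • x ∈ K}`
compact for compact `K` and `V`, so while `x` ranges over a compact neighbourhood the integrand
`t ↦ h (t⁻¹ • x)` stays supported in one compact subset of `G`; this gives integrability and
continuity of `E₁ h`. Left invariance of `μ` makes `E₁ h` constant on orbits, and its support on
`X/G` lies in the compact image of `tsupport h`. Multiplying `h` by a `G`-invariant function
multiplies `E₁ h` by that function, which gives the ideal property.

For density, lift the compact set of `X/G` outside which `r` is `ε`-small to a compact `K ⊆ X`
(the quotient map is open), take an Urysohn function `g` equal to `1` on `K`, and let `δ > 0`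
bound `E₁ g` from below over that compact set. Then `ψ = g / max δ (E₁ g)` has `E₁ ψ` with
values in `[0, 1]` and equal to `1` over the compact set, so `E₁ ((r ∘ π) ψ) = r · E₁ ψ` is
`ε`-close to `r`.
-/

open MeasureTheory Filter Topology Set

theorem ProperSMul.isCompact_setOf_exists_inv_smul_mem {G X : Type*} [TopologicalSpace G]
    [Group G] [ContinuousInv G] [TopologicalSpace X] [MulAction G X] [ProperSMul G X]
    {K V : Set X} (hK : IsCompact K) (hV : IsCompact V) :
    IsCompact {t : G | ∃ x ∈ V, t⁻¹ • x ∈ K} := by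
  convert ((ProperSMul.isProperMap_smul_pair (G := G) (X := X)).isCompact_preimage
    (hK.prod hV)).image (continuous_fst.inv (G := G)) using 1
  ext t
  constructor
  · rintro ⟨x, hxV, hxK⟩
    exact ⟨(t⁻¹, x), ⟨hxK, hxV⟩, inv_inv t⟩
  · rintro ⟨⟨s, x⟩, ⟨hsK, hxV⟩, rfl⟩
    exact ⟨x, hxV, by simpa using hsK⟩

theorem HasCompactSupport.comp_inv_smul {G X M : Type*} [TopologicalSpace G] [Group G]
    [IsTopologicalGroup G] [TopologicalSpace X] [MulAction G X] [ProperSMul G X] [Zero M]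
    {h : X → M} (hh : HasCompactSupport h) (x : X) : HasCompactSupport fun t : G => h (t⁻¹ • x) :=
  .intro (ProperSMul.isCompact_setOf_exists_inv_smul_mem hh isCompact_singleton)
    fun _ ht => image_eq_zero_of_notMem_tsupport fun hx => ht ⟨x, rfl, hx⟩

theorem IsOpenMap.exists_isCompact_subset_image {X Y : Type*} [TopologicalSpace X]
    [TopologicalSpace Y] [LocallyCompactSpace X] {f : X → Y} (hf : IsOpenMap f) {C : Set Y}
    (hC : IsCompact C) (hCf : C ⊆ range f) : ∃ K, IsCompact K ∧ C ⊆ f '' K := by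
  choose N hNc hNx using fun x : X => exists_compact_mem_nhds x
  obtain ⟨s, hs⟩ := hC.elim_finite_subcover (fun x => f '' interior (N x))
    (fun x => hf _ isOpen_interior) fun y hy => by
      obtain ⟨x, rfl⟩ := hCf hy
      exact mem_iUnion.2 ⟨x, x, mem_interior_iff_mem_nhds.2 (hNx x), rfl⟩
  refine ⟨⋃ x ∈ s, N x, s.finite_toSet.isCompact_biUnion fun x _ => hNc x, hs.trans ?_⟩
  simp only [iUnion_subset_iff]
  exact fun x hx => image_mono (interior_subset.trans (subset_biUnion_of_mem (u := N) hx))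

noncomputable section OrbitIntegral

variable {G X E : Type*} [Group G] [MeasurableSpace G] (μ : Measure G) [MulAction G X]
  [NormedAddCommGroup E] [NormedSpace ℝ E]

def orbitIntegral (h : X → E) (x : X) : E := ∫ t, h (t⁻¹ • x) ∂μ

theorem orbitIntegral_smul [MeasurableMul G] [μ.IsMulLeftInvariant] (h : X → E) (t : G)
    (x : X) :
    orbitIntegral μ h (t • x) = orbitIntegral μ h x := by
  simpa [orbitIntegral, mul_smul] using integral_mul_left_eq_self (fun s : G => h (s⁻¹ • x)) t⁻¹

theorem orbitIntegral_mul_of_invariant {𝕜 : Type*} [RCLike 𝕜] {f : X → 𝕜}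
    (hf : ∀ (t : G) x, f (t • x) = f x) (h : X → 𝕜) (x : X) :
    orbitIntegral μ (fun y => f y * h y) x = f x * orbitIntegral μ h x := by
  simp only [orbitIntegral, hf, integral_const_mul]

theorem orbitIntegral_ofReal {𝕜 : Type*} [RCLike 𝕜] (h : X → ℝ) (x : X) :
    orbitIntegral μ (fun y => (h y : 𝕜)) x = orbitIntegral μ h x :=
  integral_ofReal

variable [TopologicalSpace G] [IsTopologicalGroup G] [OpensMeasurableSpace G]
  [IsFiniteMeasureOnCompacts μ] [TopologicalSpace X] [ContinuousSMul G X] [ProperSMul G X]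

theorem integrable_comp_inv_smul {F : Type*} [NormedAddCommGroup F] {h : X → F}
    (hc : Continuous h) (hh : HasCompactSupport h) (x : X) :
    Integrable (fun t : G => h (t⁻¹ • x)) μ :=
  (by fun_prop : Continuous fun t : G => h (t⁻¹ • x)).integrable_of_hasCompactSupport
    (hh.comp_inv_smul x)

theorem continuous_orbitIntegral [LocallyCompactSpace X]
    {h : X → E} (hc : Continuous h) (hh : HasCompactSupport h) :
    Continuous (orbitIntegral μ h) := by
  refine continuous_iff_continuousAt.2 fun x₀ => ?_
  obtain ⟨V, hV, hVx₀⟩ := exists_compact_mem_nhds x₀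
  refine (continuousOn_integral_of_compact_support
    (ProperSMul.isCompact_setOf_exists_inv_smul_mem hh hV) (by fun_prop)
    fun x t hx ht => image_eq_zero_of_notMem_tsupport fun hm => ht ⟨x, hx, hm⟩).continuousAt hVx₀

theorem orbitIntegral_pos [μ.IsOpenPosMeasure] {g : X → ℝ} (hc : Continuous g)
    (hh : HasCompactSupport g) (hg : 0 ≤ g) {t : G} {x : X} (ht : 0 < g (t • x)) :
    0 < orbitIntegral μ g x := by
  have hct : Continuous fun s : G => g (s⁻¹ • x) := by fun_prop
  rw [orbitIntegral, integral_pos_iff_support_of_nonneg (f := fun s => g (s⁻¹ • x))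
    (fun s => hg _) (integrable_comp_inv_smul μ hc hh x)]
  exact hct.isOpen_support.measure_pos μ ⟨t⁻¹, by simpa using ht.ne'⟩

theorem orbitIntegral_add {h₁ h₂ : X → E} (hc₁ : Continuous h₁) (hh₁ : HasCompactSupport h₁)
    (hc₂ : Continuous h₂) (hh₂ : HasCompactSupport h₂) (x : X) :
    orbitIntegral μ (h₁ + h₂) x = orbitIntegral μ h₁ x + orbitIntegral μ h₂ x :=
  integral_add (integrable_comp_inv_smul μ hc₁ hh₁ x) (integrable_comp_inv_smul μ hc₂ hh₂ x)

end OrbitIntegral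

theorem MulAction.orbitRel_mk_smul {G X : Type*} [Group G] [MulAction G X] (t : G) (x : X) :
    Quotient.mk (MulAction.orbitRel G X) (t • x) = Quotient.mk _ x :=
  Quotient.sound (MulAction.mem_orbit x t)

noncomputable section QuotientOrbitIntegral

variable {G X E : Type*} [Group G] [MeasurableSpace G] [MeasurableMul G] (μ : Measure G)
  [μ.IsMulLeftInvariant] [MulAction G X] [NormedAddCommGroup E] [NormedSpace ℝ E]

def quotientOrbitIntegral (h : X → E) : Quotient (MulAction.orbitRel G X) → E :=
  Quotient.lift (orbitIntegral μ h) fun _ y ⟨t, hty⟩ => hty ▸ orbitIntegral_smul μ h t y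

@[simp]
theorem quotientOrbitIntegral_mk (h : X → E) (x : X) :
    quotientOrbitIntegral μ h ⟦x⟧ = orbitIntegral μ h x :=
  rfl

theorem quotientOrbitIntegral_mul_left {𝕜 : Type*} [RCLike 𝕜]
    (r : Quotient (MulAction.orbitRel G X) → 𝕜) (h : X → 𝕜) :
    quotientOrbitIntegral μ (fun x => r ⟦x⟧ * h x) = r * quotientOrbitIntegral μ h := by
  ext y
  induction y using Quotient.inductionOn with
  | h x =>
    exact orbitIntegral_mul_of_invariant μ (f := fun x => r ⟦x⟧)
      (fun t x => congrArg r (MulAction.orbitRel_mk_smul t x)) h x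

variable [TopologicalSpace G] [TopologicalSpace X] [ProperSMul G X]

theorem hasCompactSupport_quotientOrbitIntegral {h : X → E} (hh : HasCompactSupport h) :
    HasCompactSupport (quotientOrbitIntegral μ h) := by
  have hK : IsCompact (Quotient.mk (MulAction.orbitRel G X) '' tsupport h) :=
    hh.isCompact.image continuous_quot_mk
  refine .intro' hK hK.isClosed fun y hy => ?_
  obtain ⟨x, rfl⟩ := Quotient.exists_rep y
  by_contra hne
  obtain ⟨t, ht⟩ : ∃ t : G, h (t⁻¹ • x) ≠ 0 := by
    by_contra! hzero
    simp [orbitIntegral, hzero] at hne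
  exact hy ⟨t⁻¹ • x, subset_tsupport h ht, MulAction.orbitRel_mk_smul t⁻¹ x⟩

variable [IsTopologicalGroup G] [OpensMeasurableSpace G] [IsFiniteMeasureOnCompacts μ]
  [ContinuousSMul G X]

theorem continuous_quotientOrbitIntegral [LocallyCompactSpace X] {h : X → E} (hc : Continuous h)
    (hh : HasCompactSupport h) : Continuous (quotientOrbitIntegral μ h) :=
  (continuous_orbitIntegral μ hc hh).quotient_lift _

theorem quotientOrbitIntegral_add {h₁ h₂ : X → E} (hc₁ : Continuous h₁)
    (hh₁ : HasCompactSupport h₁) (hc₂ : Continuous h₂) (hh₂ : HasCompactSupport h₂) :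
    quotientOrbitIntegral μ (h₁ + h₂) =
      quotientOrbitIntegral μ h₁ + quotientOrbitIntegral μ h₂ := by
  ext y
  induction y using Quotient.inductionOn with
  | h x => exact orbitIntegral_add μ hc₁ hh₁ hc₂ hh₂ x

variable [T2Space X] [LocallyCompactSpace X]

theorem exists_orbitIntegral_eq_one_of_isCompact [μ.IsOpenPosMeasure]
    {C : Set (Quotient (MulAction.orbitRel G X))} (hC : IsCompact C) :
    ∃ ψ : X → ℝ, Continuous ψ ∧ HasCompactSupport ψ ∧ (∀ x, orbitIntegral μ ψ x ∈ Icc 0 1) ∧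
      ∀ x, ⟦x⟧ ∈ C → orbitIntegral μ ψ x = 1 := by
  obtain ⟨K, hK, hCK⟩ := MulAction.isOpenQuotientMap_quotientMk.isOpenMap
    |>.exists_isCompact_subset_image hC fun y _ => Quot.exists_rep y
  obtain ⟨g, hg1, -, hgc, hg01⟩ :=
    exists_continuous_one_zero_of_isCompact hK isClosed_empty (disjoint_empty K)
  have hg0 : 0 ≤ (g : X → ℝ) := fun x => (hg01 x).1
  have hpos : ∀ y ∈ C, 0 < quotientOrbitIntegral μ g y := by
    intro y hy
    obtain ⟨k, hk, rfl⟩ := hCK hy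
    exact orbitIntegral_pos μ g.continuous hgc hg0 (t := 1) (by simp [hg1 hk])
  obtain ⟨δ, hδ, hδC⟩ :=
    hC.exists_forall_le' (continuous_quotientOrbitIntegral μ g.continuous hgc).continuousOn hpos
  set Eg := orbitIntegral μ (g : X → ℝ)
  have hmax : ∀ x, 0 < max δ (Eg x) := fun x => lt_max_of_lt_left hδ
  have hEψ : ∀ x,
      orbitIntegral μ (fun y => (max δ (Eg y))⁻¹ * g y) x = (max δ (Eg x))⁻¹ * Eg x :=
    orbitIntegral_mul_of_invariant μ (fun t x => by simp only [Eg, orbitIntegral_smul]) g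
  refine ⟨fun y => (max δ (Eg y))⁻¹ * g y,
    ((continuous_const.max (continuous_orbitIntegral μ g.continuous hgc)).inv₀
      fun x => (hmax x).ne').mul g.continuous, hgc.mul_left, fun x => ?_, fun x hx => ?_⟩
  · have hEg0 : 0 ≤ Eg x := integral_nonneg fun t => hg0 _
    rw [hEψ]
    exact ⟨by positivity, inv_mul_le_one_of_le₀ (le_max_right _ _) (hmax x).le⟩
  · have hδx : δ ≤ Eg x := hδC _ hx
    rw [hEψ, max_eq_right hδx]
    exact inv_mul_cancel₀ (hδ.trans_le hδx).ne'

theorem exists_norm_sub_quotientOrbitIntegral_le [μ.IsOpenPosMeasure] {𝕜 : Type*} [RCLike 𝕜]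
    {r : Quotient (MulAction.orbitRel G X) → 𝕜} (hr : Continuous r)
    (hr0 : Tendsto r (cocompact _) (𝓝 0)) {ε : ℝ} (hε : 0 < ε) :
    ∃ h : X → 𝕜, Continuous h ∧ HasCompactSupport h ∧
      ∀ y, ‖r y - quotientOrbitIntegral μ h y‖ ≤ ε := by
  obtain ⟨C, hC, hCr⟩ := mem_cocompact.1 (hr0 (Metric.closedBall_mem_nhds 0 hε))
  obtain ⟨ψ, hψc, hψh, hψ01, hψC⟩ := exists_orbitIntegral_eq_one_of_isCompact μ hC
  refine ⟨fun x => r ⟦x⟧ * (ψ x : 𝕜),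
    (hr.comp continuous_quot_mk).mul (RCLike.continuous_ofReal.comp hψc),
    (hψh.comp_left RCLike.ofReal_zero).mul_left, ?_⟩
  intro y
  obtain ⟨x, rfl⟩ := Quotient.exists_rep y
  have hEh : quotientOrbitIntegral μ (fun x => r ⟦x⟧ * (ψ x : 𝕜)) ⟦x⟧ =
      r ⟦x⟧ * ((orbitIntegral μ ψ x : ℝ) : 𝕜) := by
    rw [quotientOrbitIntegral_mul_left, Pi.mul_apply, quotientOrbitIntegral_mk,
      orbitIntegral_ofReal]
  have hnorm : ‖r ⟦x⟧ - r ⟦x⟧ * ((orbitIntegral μ ψ x : ℝ) : 𝕜)‖ =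
      ‖r ⟦x⟧‖ * (1 - orbitIntegral μ ψ x) := by
    rw [← mul_one_sub, norm_mul, ← RCLike.ofReal_one, ← RCLike.ofReal_sub, RCLike.norm_of_nonneg
      (sub_nonneg.2 (hψ01 x).2)]
  rw [hEh, hnorm]
  by_cases hx : ⟦x⟧ ∈ C
  · simp [hψC x hx, hε.le]
  · have hrx : ‖r ⟦x⟧‖ ≤ ε := by simpa using hCr hx
    nlinarith [(hψ01 x).1, norm_nonneg (r ⟦x⟧)]

end QuotientOrbitIntegral

theorem stmt14_general
    {G : Type} [TopologicalSpace G] [Group G] [IsTopologicalGroup G]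
    [MeasurableSpace G] [BorelSpace G]
    (μ : Measure G) [μ.IsHaarMeasure]
    {X : Type} [TopologicalSpace X] [T2Space X] [LocallyCompactSpace X]
    [MulAction G X] [ContinuousSMul G X] [ProperSMul G X] :
    -- the set of induced functions Ẽ₁(h) on the orbit space X/G
    let S : Set (Quotient (MulAction.orbitRel G X) → ℂ) :=
      {q | Continuous q ∧
        Filter.Tendsto q (Filter.cocompact (Quotient (MulAction.orbitRel G X))) (𝓝 0) ∧
        ∃ h : X → ℂ, Continuous h ∧ HasCompactSupport h ∧
          ∀ x : X, q (Quotient.mk (MulAction.orbitRel G X) x) = ∫ t, h (t⁻¹ • x) ∂μ}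
    -- well-definedness, boundedness, continuity, invariance, and membership in C₀(X/G)
    (∀ h : X → ℂ, Continuous h → HasCompactSupport h →
      (∀ x : X, Continuous (fun t : G => h (t⁻¹ • x)) ∧
          HasCompactSupport (fun t : G => h (t⁻¹ • x))) ∧
      (∃ C : ℝ, ∀ x : X, ‖∫ t, h (t⁻¹ • x) ∂μ‖ ≤ C) ∧
      (Continuous fun x : X => ∫ t, h (t⁻¹ • x) ∂μ) ∧
      (∀ (t : G) (x : X), (∫ s, h (s⁻¹ • t • x) ∂μ) = ∫ s, h (s⁻¹ • x) ∂μ) ∧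
      (∃ q : Quotient (MulAction.orbitRel G X) → ℂ,
        (∀ x : X, q (Quotient.mk (MulAction.orbitRel G X) x) = ∫ t, h (t⁻¹ • x) ∂μ) ∧
        Continuous q ∧
        Filter.Tendsto q (Filter.cocompact (Quotient (MulAction.orbitRel G X))) (𝓝 0))) ∧
    -- S is a linear subspace of C₀(X/G)
    (∀ q₁ ∈ S, ∀ q₂ ∈ S, q₁ + q₂ ∈ S) ∧
    (∀ c : ℂ, ∀ q ∈ S, c • q ∈ S) ∧
    -- S is closed under multiplication by arbitrary elements of C₀(X/G)
    (∀ q ∈ S, ∀ r : Quotient (MulAction.orbitRel G X) → ℂ, Continuous r →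
      Filter.Tendsto r (Filter.cocompact (Quotient (MulAction.orbitRel G X))) (𝓝 0) →
      r * q ∈ S) ∧
    -- S is dense in C₀(X/G) for the supremum norm
    (∀ r : Quotient (MulAction.orbitRel G X) → ℂ, Continuous r →
      Filter.Tendsto r (Filter.cocompact (Quotient (MulAction.orbitRel G X))) (𝓝 0) →
      ∀ ε > (0 : ℝ), ∃ q ∈ S, ∀ y, ‖r y - q y‖ ≤ ε) := by
  intro S
  have mem_S {h : X → ℂ} (hc : Continuous h) (hh : HasCompactSupport h) :
      quotientOrbitIntegral μ h ∈ S :=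
    ⟨continuous_quotientOrbitIntegral μ hc hh,
      (hasCompactSupport_quotientOrbitIntegral μ hh).is_zero_at_infty, h, hc, hh, fun _ => rfl⟩
  have of_mem_S {q} (hq : q ∈ S) : ∃ h : X → ℂ, Continuous h ∧ HasCompactSupport h ∧
      q = quotientOrbitIntegral μ h :=
    let ⟨_, _, h, hc, hh, hq⟩ := hq
    ⟨h, hc, hh, funext fun y => Quotient.inductionOn y hq⟩
  refine ⟨fun h hc hh => ?_, fun _ hq₁ _ hq₂ => ?_, fun c _ hq => ?_, fun _ hq r hr _ => ?_,
    fun r hr hr0 ε hε => ?_⟩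
  · obtain ⟨C, hC⟩ := (hasCompactSupport_quotientOrbitIntegral μ hh).exists_bound_of_continuous
      (continuous_quotientOrbitIntegral μ hc hh)
    exact ⟨fun x => ⟨by fun_prop, hh.comp_inv_smul x⟩, ⟨C, fun x => hC ⟦x⟧⟩,
      continuous_orbitIntegral μ hc hh, orbitIntegral_smul μ h,
      quotientOrbitIntegral μ h, fun _ => rfl, (mem_S hc hh).1, (mem_S hc hh).2.1⟩
  · obtain ⟨h₁, hc₁, hh₁, rfl⟩ := of_mem_S hq₁
    obtain ⟨h₂, hc₂, hh₂, rfl⟩ := of_mem_S hq₂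
    rw [← quotientOrbitIntegral_add μ hc₁ hh₁ hc₂ hh₂]
    exact mem_S (hc₁.add hc₂) (hh₁.add hh₂)
  · obtain ⟨h, hc, hh, rfl⟩ := of_mem_S hq
    rw [show c • quotientOrbitIntegral μ h = (fun _ => c) * quotientOrbitIntegral μ h from rfl,
      ← quotientOrbitIntegral_mul_left]
    exact mem_S (continuous_const.mul hc) hh.mul_left
  · obtain ⟨h, hc, hh, rfl⟩ := of_mem_S hq
    rw [← quotientOrbitIntegral_mul_left]
    exact mem_S ((hr.comp continuous_quot_mk).mul hc) hh.mul_left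
  · obtain ⟨h, hc, hh, hrh⟩ := exists_norm_sub_quotientOrbitIntegral_le μ hr hr0 hε
    exact ⟨_, mem_S hc hh, hrh⟩

theorem stmt14
    {G : Type} [TopologicalSpace G] [Group G] [IsTopologicalGroup G]
    [LocallyCompactSpace G] [T2Space G] [MeasurableSpace G] [BorelSpace G]
    (μ : Measure G) [μ.IsHaarMeasure]
    {X : Type} [TopologicalSpace X] [T2Space X] [LocallyCompactSpace X]
    [MulAction G X] [ContinuousSMul G X] [ProperSMul G X] :
    -- the set of induced functions Ẽ₁(h) on the orbit space X/G
    let S : Set (Quotient (MulAction.orbitRel G X) → ℂ) :=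
      {q | Continuous q ∧
        Filter.Tendsto q (Filter.cocompact (Quotient (MulAction.orbitRel G X))) (𝓝 0) ∧
        ∃ h : X → ℂ, Continuous h ∧ HasCompactSupport h ∧
          ∀ x : X, q (Quotient.mk (MulAction.orbitRel G X) x) = ∫ t, h (t⁻¹ • x) ∂μ}
    -- well-definedness, boundedness, continuity, invariance, and membership in C₀(X/G)
    (∀ h : X → ℂ, Continuous h → HasCompactSupport h →
      (∀ x : X, Continuous (fun t : G => h (t⁻¹ • x)) ∧
          HasCompactSupport (fun t : G => h (t⁻¹ • x))) ∧
      (∃ C : ℝ, ∀ x : X, ‖∫ t, h (t⁻¹ • x) ∂μ‖ ≤ C) ∧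
      (Continuous fun x : X => ∫ t, h (t⁻¹ • x) ∂μ) ∧
      (∀ (t : G) (x : X), (∫ s, h (s⁻¹ • t • x) ∂μ) = ∫ s, h (s⁻¹ • x) ∂μ) ∧
      (∃ q : Quotient (MulAction.orbitRel G X) → ℂ,
        (∀ x : X, q (Quotient.mk (MulAction.orbitRel G X) x) = ∫ t, h (t⁻¹ • x) ∂μ) ∧
        Continuous q ∧
        Filter.Tendsto q (Filter.cocompact (Quotient (MulAction.orbitRel G X))) (𝓝 0))) ∧
    -- S is a linear subspace of C₀(X/G)
    (∀ q₁ ∈ S, ∀ q₂ ∈ S, q₁ + q₂ ∈ S) ∧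
    (∀ c : ℂ, ∀ q ∈ S, c • q ∈ S) ∧
    -- S is closed under multiplication by arbitrary elements of C₀(X/G)
    (∀ q ∈ S, ∀ r : Quotient (MulAction.orbitRel G X) → ℂ, Continuous r →
      Filter.Tendsto r (Filter.cocompact (Quotient (MulAction.orbitRel G X))) (𝓝 0) →
      r * q ∈ S) ∧
    -- S is dense in C₀(X/G) for the supremum norm
    (∀ r : Quotient (MulAction.orbitRel G X) → ℂ, Continuous r →
      Filter.Tendsto r (Filter.cocompact (Quotient (MulAction.orbitRel G X))) (𝓝 0) →
      ∀ ε > (0 : ℝ), ∃ q ∈ S, ∀ y, ‖r y - q y‖ ≤ ε) :=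
  stmt14_general μ
end
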